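/- arXiv:2604.27919 — 2 statements merged into one kernel-verified Lean document; each statement's English description precedes it below -/
import Mathlib

section
/- Let $\Phi_i, \Phi_j, \Phi_k \in [0, \pi)$ satisfy $\cos\Phi_i + \cos\Phi_j\cos\Phi_k \geq 0$, $\cos\Phi_j + \cos\Phi_k\cos\Phi_i \geq 0$, and $\cos\Phi_k + \cos\Phi_i\cos\Phi_j \geq 0$. Then $\Phi_i + \Phi_j + \Phi_k \leq \pi$, or all three inequalities $\Phi_i + \Phi_j < \pi + \Phi_k$, $\Phi_j + \Phi_k < \pi + \Phi_i$, $\Phi_k + \Phi_i < \pi + \Phi_j$ hold. -/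
/-!
If, say, `Φk + π ≤ Φi + Φj`, then `Φj ≥ π - (Φi - Φk)`, so monotonicity of `cos` on `[0, π]` gives
`cos Φj + cos Φk cos Φi ≤ -sin Φi sin Φk`. The hypothesis forces this to vanish, hence `Φk = 0`,
and then `cos Φi + cos Φj ≥ 0` gives `Φi + Φj ≤ π`. So whenever one of the strict inequalities
fails, the angle sum is at most `π`.
-/

open Real

lemma cos_le_neg_cos_of_pi_le_add {x y : ℝ} (hx : x ≤ π) (hy : y ≤ π) (hxy : π ≤ x + y) :
    cos y ≤ -cos x := by
  rw [← cos_pi_sub]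
  exact cos_le_cos_of_nonneg_of_le_pi (by linarith) hy (by linarith)

lemma add_le_pi_of_cos_add_cos_nonneg {x y : ℝ} (hx : x ≤ π) (hy : y ≤ π)
    (h : 0 ≤ cos x + cos y) : x + y ≤ π := by
  by_contra! hxy
  have : cos y < cos (π - x) := cos_lt_cos_of_nonneg_of_le_pi (by linarith) hy (by linarith)
  rw [cos_pi_sub] at this
  linarith

lemma eq_zero_of_cos_add_cos_mul_cos_nonneg {a b c : ℝ} (ha : a < π) (hb : b ≤ π) (hc : 0 ≤ c)
    (h : 0 ≤ cos b + cos c * cos a) (hge : π + c ≤ a + b) : c = 0 := by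
  by_contra hc0
  have hc_pos : 0 < c := lt_of_le_of_ne hc (Ne.symm hc0)
  have hsin_a : 0 < sin a := sin_pos_of_pos_of_lt_pi (by linarith) ha
  have hsin_c : 0 < sin c := sin_pos_of_pos_of_lt_pi hc_pos (by linarith)
  have hcos_b : cos b ≤ -cos (a - c) := cos_le_neg_cos_of_pi_le_add (by linarith) hb (by linarith)
  rw [cos_sub] at hcos_b
  nlinarith [mul_pos hsin_a hsin_c]

lemma add_add_le_pi_of_pi_add_le_add {a b c : ℝ} (ha : a < π) (hb : b ≤ π) (hc : 0 ≤ c)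
    (h : 0 ≤ cos b + cos c * cos a) (hge : π + c ≤ a + b) : a + b + c ≤ π := by
  obtain rfl := eq_zero_of_cos_add_cos_mul_cos_nonneg ha hb hc h hge
  rw [cos_zero, one_mul, add_comm] at h
  simpa using add_le_pi_of_cos_add_cos_nonneg ha.le hb h

theorem stmt3 (Φi Φj Φk : ℝ) (hi : Φi ∈ Set.Ico 0 Real.pi)
    (hj : Φj ∈ Set.Ico 0 Real.pi) (hk : Φk ∈ Set.Ico 0 Real.pi)
    (h1 : Real.cos Φi + Real.cos Φj * Real.cos Φk ≥ 0)
    (h2 : Real.cos Φj + Real.cos Φk * Real.cos Φi ≥ 0)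
    (h3 : Real.cos Φk + Real.cos Φi * Real.cos Φj ≥ 0) :
    Φi + Φj + Φk ≤ Real.pi ∨
      (Φi + Φj < Real.pi + Φk ∧ Φj + Φk < Real.pi + Φi ∧ Φk + Φi < Real.pi + Φj) := by
  rw [or_iff_not_imp_right]
  simp only [not_and_or, not_lt]
  rintro (hij | hjk | hki)
  · exact add_add_le_pi_of_pi_add_le_add hi.2 hj.2.le hk.1 h2 hij
  · linarith [add_add_le_pi_of_pi_add_le_add hj.2 hk.2.le hi.1 h3 hjk]
  · linarith [add_add_le_pi_of_pi_add_le_add hk.2 hi.2.le hj.1 h1 hki]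
end

section
/- Let $r_i, r_j, r_k > 0$ and $\Phi_i, \Phi_j, \Phi_k \in [0, \pi)$ satisfy $\cos\Phi_s + \cos\Phi_t\cos\Phi_u \geq 0$ for all permutations $(s,t,u)$ of $(i,j,k)$. Define Euclidean edge lengths $l_k = \sqrt{r_i^2 + r_j^2 + 2r_ir_j\cos\Phi_k}$ (and cyclically). Then $l_i, l_j, l_k$ satisfy the strict triangle inequalities $l_i < l_j + l_k$, $l_j < l_k + l_i$, $l_k < l_i + l_j$. -/
/-!
Write `a, b, c` for the cosines and `X, Y, Z` for the squared edge lengths. The strict triangle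
inequality `√X < √Y + √Z` holds as soon as `(Y + Z - X)² < 4 Y Z`, and `4 Y Z - (Y + Z - X)²`
(sixteen times the squared area, by Heron) is four times the symmetric sum
`(rᵢrⱼ)²(1 - c²) + (rₖrᵢ)²(1 - b²) + (rⱼrₖ)²(1 - a²) + 2 rᵢrⱼrₖ (rᵢ(a + bc) + rⱼ(b + ca) + rₖ(c + ab))`.
Condition (S) makes every summand nonnegative, and `a, b, c ∈ (-1, 1]` makes the sum positive.
-/

open Real

lemma Real.neg_one_lt_cos_of_mem_Ico {x : ℝ} (hx : x ∈ Set.Ico 0 π) : -1 < cos x := by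
  simpa only [cos_pi] using cos_lt_cos_of_nonneg_of_le_pi hx.1 le_rfl hx.2

lemma Real.sqrt_lt_sqrt_add_sqrt {x y z : ℝ} (hy : 0 ≤ y) (hz : 0 ≤ z)
    (h : (y + z - x) ^ 2 < 4 * y * z) : √x < √y + √z := by
  have hyz : |y + z - x| < 2 * (√y * √z) := by
    rw [← sqrt_mul hy, ← sqrt_mul_self zero_le_two, ← sqrt_mul (by norm_num)]
    exact lt_sqrt_of_sq_lt (by rw [sq_abs]; linarith)
  have hsq : (√y + √z) ^ 2 = y + z + 2 * (√y * √z) := by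
    rw [add_sq, sq_sqrt hy, sq_sqrt hz]; ring
  have hpos : 0 < √y + √z := by
    have : 0 < √y * √z := by linarith [abs_nonneg (y + z - x)]
    nlinarith [sqrt_nonneg y, sqrt_nonneg z]
  rw [sqrt_lt' hpos, hsq]
  linarith [neg_abs_le (y + z - x)]

/-- `c` plays the role of `cos Φ`, for the exterior intersection angle `Φ` of the two circles. -/
def edgeLengthSq (r s c : ℝ) : ℝ := r ^ 2 + s ^ 2 + 2 * r * s * c

lemma edgeLengthSq_nonneg {r s c : ℝ} (hr : 0 ≤ r) (hs : 0 ≤ s) (hc : -1 ≤ c) :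
    0 ≤ edgeLengthSq r s c := by
  unfold edgeLengthSq
  nlinarith [sq_nonneg (r - s), mul_nonneg (mul_nonneg hr hs) (neg_le_iff_add_nonneg.1 hc)]

lemma four_mul_edgeLengthSq_sub_sq (ri rj rk a b c : ℝ) :
    4 * edgeLengthSq rk ri b * edgeLengthSq ri rj c
        - (edgeLengthSq rk ri b + edgeLengthSq ri rj c - edgeLengthSq rj rk a) ^ 2
      = 4 * ((ri * rj) ^ 2 * (1 - c ^ 2) + (rk * ri) ^ 2 * (1 - b ^ 2)
          + ((rj * rk) ^ 2 * (1 - a ^ 2) + 2 * ri ^ 2 * rj * rk * (a + b * c))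
          + 2 * ri * rj * rk * (rj * (b + c * a) + rk * (c + a * b))) := by
  unfold edgeLengthSq
  ring

lemma sq_sub_edgeLengthSq_lt {ri rj rk a b c : ℝ} (hri : 0 < ri) (hrj : 0 < rj) (hrk : 0 < rk)
    (ha : -1 < a) (ha1 : a ≤ 1) (hb : -1 < b) (hb1 : b ≤ 1) (hc : -1 < c) (hc1 : c ≤ 1)
    (h1 : 0 ≤ a + b * c) (h2 : 0 ≤ b + c * a) (h3 : 0 ≤ c + a * b) :
    (edgeLengthSq rk ri b + edgeLengthSq ri rj c - edgeLengthSq rj rk a) ^ 2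
      < 4 * edgeLengthSq rk ri b * edgeLengthSq ri rj c := by
  have hb2 : 0 ≤ (rk * ri) ^ 2 * (1 - b ^ 2) := by
    have : 0 ≤ 1 - b ^ 2 := by nlinarith
    positivity
  have hc2 : 0 ≤ (ri * rj) ^ 2 * (1 - c ^ 2) := by
    have : 0 ≤ 1 - c ^ 2 := by nlinarith
    positivity
  have hcross : 0 ≤ 2 * ri * rj * rk * (rj * (b + c * a) + rk * (c + a * b)) := by positivity
  have hstrict : 0 < (rj * rk) ^ 2 * (1 - a ^ 2) + 2 * ri ^ 2 * rj * rk * (a + b * c) := by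
    rcases ha1.lt_or_eq with ha1 | rfl
    · have : 0 < 1 - a ^ 2 := by nlinarith
      have : 0 ≤ 2 * ri ^ 2 * rj * rk * (a + b * c) := by positivity
      have : 0 < (rj * rk) ^ 2 * (1 - a ^ 2) := by positivity
      linarith
    · -- `1 + b c > 0`: add `(1 + b)(1 + c) > 0` and `(1 - b)(1 - c) ≥ 0`
      have : 0 < 1 + b * c := by
        nlinarith [mul_pos (neg_lt_iff_pos_add'.1 hb) (neg_lt_iff_pos_add'.1 hc),
          mul_nonneg (sub_nonneg.2 hb1) (sub_nonneg.2 hc1)]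
      have : 0 < 2 * ri ^ 2 * rj * rk * (1 + b * c) := by positivity
      nlinarith
  linarith [four_mul_edgeLengthSq_sub_sq ri rj rk a b c]

lemma sqrt_edgeLengthSq_lt_add {ri rj rk a b c : ℝ} (hri : 0 < ri) (hrj : 0 < rj) (hrk : 0 < rk)
    (ha : -1 < a) (ha1 : a ≤ 1) (hb : -1 < b) (hb1 : b ≤ 1) (hc : -1 < c) (hc1 : c ≤ 1)
    (h1 : 0 ≤ a + b * c) (h2 : 0 ≤ b + c * a) (h3 : 0 ≤ c + a * b) :
    √(edgeLengthSq rj rk a) < √(edgeLengthSq rk ri b) + √(edgeLengthSq ri rj c) :=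
  sqrt_lt_sqrt_add_sqrt (edgeLengthSq_nonneg hrk.le hri.le hb.le)
    (edgeLengthSq_nonneg hri.le hrj.le hc.le)
    (sq_sub_edgeLengthSq_lt hri hrj hrk ha ha1 hb hb1 hc hc1 h1 h2 h3)

theorem stmt5 (ri rj rk Φi Φj Φk : ℝ)
    (hri : 0 < ri) (hrj : 0 < rj) (hrk : 0 < rk)
    (hi : Φi ∈ Set.Ico 0 Real.pi) (hj : Φj ∈ Set.Ico 0 Real.pi)
    (hk : Φk ∈ Set.Ico 0 Real.pi)
    (h1 : Real.cos Φi + Real.cos Φj * Real.cos Φk ≥ 0)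
    (h2 : Real.cos Φj + Real.cos Φk * Real.cos Φi ≥ 0)
    (h3 : Real.cos Φk + Real.cos Φi * Real.cos Φj ≥ 0) :
    let li := Real.sqrt (rj ^ 2 + rk ^ 2 + 2 * rj * rk * Real.cos Φi)
    let lj := Real.sqrt (rk ^ 2 + ri ^ 2 + 2 * rk * ri * Real.cos Φj)
    let lk := Real.sqrt (ri ^ 2 + rj ^ 2 + 2 * ri * rj * Real.cos Φk)
    li < lj + lk ∧ lj < lk + li ∧ lk < li + lj := by
  have hi' := neg_one_lt_cos_of_mem_Ico hi
  have hj' := neg_one_lt_cos_of_mem_Ico hj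
  have hk' := neg_one_lt_cos_of_mem_Ico hk
  have hi1 := cos_le_one Φi
  have hj1 := cos_le_one Φj
  have hk1 := cos_le_one Φk
  exact ⟨sqrt_edgeLengthSq_lt_add hri hrj hrk hi' hi1 hj' hj1 hk' hk1 h1 h2 h3,
    sqrt_edgeLengthSq_lt_add hrj hrk hri hj' hj1 hk' hk1 hi' hi1 h2 h3 h1,
    sqrt_edgeLengthSq_lt_add hrk hri hrj hk' hk1 hi' hi1 hj' hj1 h3 h1 h2⟩
end
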